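/- Let p be a prime, k ≥ 1, and P a Sylow p-subgroup of S_{p^k}. If θ = X(φ; φ_ε) ∈ Irr(P) is the Gallagher product of the canonical extension of φ^{×p} (φ ∈ Irr(P_{p^{k-1}})) with the inflation of φ_ε ∈ Irr(C_p), and σ ∈ Gal(Q(ω)/Q) with ω = e^{2πi/p}, then θ^σ = X(φ^σ; (φ_ε)^σ). -/
import Mathlib


/-- The action of permutations of `ι` on `ι`-indexed tuples, permuting the coordinates:
`(π • f) i = f (π⁻¹ i)`. -/
def permAction (ι : Type*) (G : Type*) [Group G] : Equiv.Perm ι →* MulAut (ι → G) where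
  toFun π :=
    { toFun := fun f i => f (π⁻¹ i)
      invFun := fun f i => f (π i)
      left_inv := fun f => funext fun i => by simp
      right_inv := fun f => funext fun i => by simp
      map_mul' := fun f g => rfl }
  map_one' := by apply MulEquiv.ext; intro f; funext i; simp
  map_mul' := fun π₁ π₂ => by apply MulEquiv.ext; intro f; funext i; simp

/-- `C_p = Multiplicative (ZMod p)` acting on `ZMod p` by translations, as permutations. -/
def rotHom (p : ℕ) : Multiplicative (ZMod p) →* Equiv.Perm (ZMod p) where
  toFun z := Equiv.addRight (Multiplicative.toAdd z)
  map_one' := by ext i; simp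
  map_mul' := fun z w => by ext i; simp [add_comm, add_assoc, add_left_comm]

/-- The cyclic rotation action of `C_p = Multiplicative (ZMod p)` on `p`-tuples,
`(z • f) i = f (i - z)`. -/
def cyclicRot (p : ℕ) (G : Type*) [Group G] : Multiplicative (ZMod p) →* MulAut (ZMod p → G) :=
  (permAction (ZMod p) G).comp (rotHom p)
/-- The wreath product `G ≀ C_p = G^{×p} ⋊ C_p`, with `C_p` cyclically permuting
the `p` coordinates of the base group. -/
abbrev Wr (p : ℕ) (G : Type) [Group G] : Type :=
  SemidirectProduct (ZMod p → G) (Multiplicative (ZMod p)) (cyclicRot p G)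

def sdEquivProd {N G : Type*} [Group N] [Group G] (φ : G →* MulAut N) :
    SemidirectProduct N G φ ≃ N × G where
  toFun x := (x.left, x.right)
  invFun x := ⟨x.1, x.2⟩
  left_inv x := by cases x; rfl
  right_inv x := rfl

instance {N G : Type*} [Group N] [Group G] {φ : G →* MulAut N} [Fintype N] [Fintype G] :
    Fintype (SemidirectProduct N G φ) :=
  Fintype.ofEquiv _ (sdEquivProd φ).symm
/-- `χ` is an irreducible (ordinary, complex) character of the group `G`:
it is the character of some simple finite-dimensional complex representation. -/
def IsIrrChar (G : Type) [Group G] (χ : G → ℂ) : Prop :=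
  ∃ V : FDRep ℂ G, CategoryTheory.Simple V ∧ ∀ g, V.character g = χ g
/-- A fixed primitive `p`-th root of unity `ω = e^{2πi/p}` in `ℂ`. -/
noncomputable def zeta (p : ℕ) : ℂ := Complex.exp (2 * Real.pi * Complex.I / p)

/-- The linear character `φ_ε` of `C_p`, with `φ_ε(g^j) = ω^{εj}` for the fixed generator `g`. -/
noncomputable def linChar (p : ℕ) (ε : ZMod p) (z : Multiplicative (ZMod p)) : ℂ :=
  zeta p ^ (ε * Multiplicative.toAdd z).val
/-- The ordered product `f₁ · f_{δ^{-1}(1)} · f_{δ^{-2}(1)} ⋯ f_{δ^{-(p-1)}(1)}`, where `δ` is the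
translation of `ZMod p` by `d` (base point `1` taken to be `0 : ZMod p`). -/
def orderedProd (p : ℕ) (G : Type) [Group G] (f : ZMod p → G) (d : ZMod p) : G :=
  ((List.range p).map (fun j => f (-(j : ZMod p) * d))).prod

/-- The Gallagher product `X(φ; φ_ε)` of the canonical extension of `φ^{×p}` to `G ≀ C_p`
with the inflation of the linear character `φ_ε` of `C_p`, given by its explicit values. -/
noncomputable def Xchar (p : ℕ) [NeZero p] (G : Type) [Group G] (φ : G → ℂ) (ε : ZMod p)
    (w : Wr p G) : ℂ :=
  if w.right = 1 then ∏ i : ZMod p, φ (w.left i)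
  else linChar p ε w.right * φ (orderedProd p G w.left (Multiplicative.toAdd w.right))

lemma zeta_prim (p : ℕ) [NeZero p] : IsPrimitiveRoot (zeta p) p := by
  simpa [zeta] using Complex.isPrimitiveRoot_exp p (NeZero.ne p)

lemma sigma_linChar (p : ℕ) [NeZero p] (ε : ZMod p) (b : ℕ) (σ : ℂ ≃+* ℂ)
    (hσ : σ (zeta p) = zeta p ^ b) (z : Multiplicative (ZMod p)) :
    σ (linChar p ε z) = linChar p (ε * (b : ZMod p)) z := by
  unfold linChar
  rw [map_pow, hσ, ← pow_mul]
  have h : (b * (ε * Multiplicative.toAdd z).val) % p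
      = (ε * (b : ZMod p) * Multiplicative.toAdd z).val := by
    rw [← ZMod.val_natCast]
    congr 1
    push_cast
    rw [ZMod.natCast_val, ZMod.cast_id]
    ring
  rw [← h]
  have hp : orderOf (zeta p) = p := (zeta_prim p).eq_orderOf.symm
  have h2 := pow_mod_orderOf (zeta p) (b * (ε * Multiplicative.toAdd z).val)
  rw [hp] at h2
  exact h2.symm

/-- Galois action on the characters `X(φ; φ_ε)` of a Sylow `p`-subgroup
`P = Q ≀ C_p` of `S_{p^k}` (with `Q ∈ Syl_p(S_{p^{k-1}})`): if `θ = X(φ; φ_ε) ∈ Irr(P)` and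
`σ ∈ Gal(ℚ(ω)/ℚ)` satisfies `ω ↦ ω^b`, then `θ^σ = X(φ^σ; (φ_ε)^σ) = X(φ^σ; φ_{εb})`. -/
theorem galois_action_on_Xchar (p k : ℕ) [Fact p.Prime] (hk : 1 ≤ k)
    (Q : Sylow p (Equiv.Perm (Fin (p ^ (k - 1)))))
    (φ : ↥(Q : Subgroup (Equiv.Perm (Fin (p ^ (k - 1))))) → ℂ)
    (hφ : IsIrrChar ↥(Q : Subgroup (Equiv.Perm (Fin (p ^ (k - 1))))) φ)
    (ε : ZMod p)
    (hθ : IsIrrChar (Wr p ↥(Q : Subgroup (Equiv.Perm (Fin (p ^ (k - 1))))))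
      (Xchar p ↥(Q : Subgroup (Equiv.Perm (Fin (p ^ (k - 1))))) φ ε))
    (b : ℕ) (σ : ℂ ≃+* ℂ) (hσ : σ (zeta p) = zeta p ^ b) :
    (fun w => σ (Xchar p ↥(Q : Subgroup (Equiv.Perm (Fin (p ^ (k - 1))))) φ ε w)) =
      Xchar p ↥(Q : Subgroup (Equiv.Perm (Fin (p ^ (k - 1)))))
        (fun g => σ (φ g)) (ε * (b : ZMod p)) := by
  funext w
  unfold Xchar
  split
  · rw [map_prod]
  · rw [map_mul, sigma_linChar p ε b σ hσ]
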